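/- arXiv:1202.0362 — 6 statements merged into one kernel-verified Lean document; each statement's English description precedes it below -/
import Mathlib

section
/- Let p be a prime, a an element of F_{p^m}^× for a positive integer m, and f(x) = x^{p^m} + a·x over the algebraic closure of F_p. Then for all n ≥ 1, the n-fold composition satisfies f^n(x) = Σ_{k=0}^{n} C(n,k) · a^{n-k} · x^{p^{km}}. -/
/-!
For `q = p ^ m`, composing with `X ^ q + C a * X` is the additive operator `F + A` on polynomials,
where `F g = g ^ q` is a power of Frobenius and `A g = a * g`. Since `a ^ q = a`, the two operators
commute, so the binomial theorem expands `(F + A) ^ n`, and `F ^ k X = X ^ (q ^ k)`.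
-/

open Polynomial

/-- n-fold composition of a polynomial with itself. -/
noncomputable def polyIter {K : Type*} [CommRing K] (f : K[X]) : ℕ → K[X]
  | 0 => X
  | n + 1 => f.comp (polyIter f n)

section IterateFrobeniusAddMul

variable {S : Type*} [CommSemiring S] (p : ℕ) [ExpChar S p] (m : ℕ)

theorem commute_iterateFrobenius_mulLeft {c : S} (hc : c ^ p ^ m = c) :
    Commute (iterateFrobenius S p m).toAddMonoidHom.toNatLinearMap (LinearMap.mulLeft ℕ c) := by
  ext x
  change (c * x) ^ p ^ m = c * x ^ p ^ m
  rw [mul_pow, hc]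

theorem iterate_pow_add_mul_apply {c : S} (hc : c ^ p ^ m = c) (n : ℕ) (x : S) :
    (fun y ↦ y ^ p ^ m + c * y)^[n] x =
      ∑ k ∈ Finset.range (n + 1), (n.choose k : S) * c ^ (n - k) * x ^ p ^ (k * m) := by
  set F : Module.End ℕ S := (iterateFrobenius S p m).toAddMonoidHom.toNatLinearMap
  set A : Module.End ℕ S := LinearMap.mulLeft ℕ c
  have hF (k : ℕ) (y : S) : (F ^ k) y = y ^ p ^ (k * m) := by
    rw [Module.End.coe_pow, mul_comm, pow_mul]
    exact congrFun (pow_iterate (p ^ m) k) y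
  have hA (k : ℕ) (y : S) : (A ^ k) y = c ^ k * y := by
    rw [LinearMap.pow_mulLeft, LinearMap.mulLeft_apply]
  change (⇑(F + A))^[n] x = _
  rw [← Module.End.coe_pow, (commute_iterateFrobenius_mulLeft p m hc).add_pow, LinearMap.sum_apply]
  refine Finset.sum_congr rfl fun k _ ↦ ?_
  have hFA := (commute_iterateFrobenius_mulLeft p m hc).pow_pow k (n - k)
  rw [hFA.eq, ← (Nat.cast_commute _ _).eq, Module.End.mul_apply, Module.End.mul_apply,
    Module.End.natCast_apply, hA, hF, nsmul_eq_mul, mul_assoc]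

end IterateFrobeniusAddMul

theorem polyIter_eq_iterate_comp {K : Type*} [CommRing K] (f : K[X]) (n : ℕ) :
    polyIter f n = (f.comp ·)^[n] X := by
  induction n with
  | zero => rfl
  | succ n ih => rw [Function.iterate_succ_apply', ← ih, polyIter]

theorem polyIter_X_pow_add_C_mul_X {R : Type*} [CommRing R] (p m : ℕ) [ExpChar R p] {a : R}
    (ha : a ^ p ^ m = a) (n : ℕ) :
    polyIter (X ^ p ^ m + C a * X) n =
      ∑ k ∈ Finset.range (n + 1), (n.choose k : R[X]) * C (a ^ (n - k)) * X ^ p ^ (k * m) := by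
  have hcomp : (fun g ↦ (X ^ p ^ m + C a * X).comp g) = fun g ↦ g ^ p ^ m + C a * g := by
    funext g
    simp only [add_comp, pow_comp, X_comp, mul_comp, C_comp]
  simp_rw [polyIter_eq_iterate_comp, hcomp, C_pow]
  exact iterate_pow_add_mul_apply p m (by rw [← C_pow, ha]) n X

theorem iter_additive_binomial_general (p m : ℕ) [Fact p.Prime]
    (a : AlgebraicClosure (ZMod p)) (hafix : a ^ p ^ m = a)
    (n : ℕ) :
    polyIter (X ^ p ^ m + C a * X) n =
      ∑ k ∈ Finset.range (n + 1),
        (n.choose k : Polynomial (AlgebraicClosure (ZMod p))) *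
          C (a ^ (n - k)) * X ^ p ^ (k * m) :=
  polyIter_X_pow_add_C_mul_X p m hafix n

theorem iter_additive_binomial (p m : ℕ) [Fact p.Prime] (hm : 0 < m)
    (a : AlgebraicClosure (ZMod p)) (ha : a ≠ 0) (hafix : a ^ p ^ m = a)
    (n : ℕ) (hn : 1 ≤ n) :
    polyIter (X ^ p ^ m + C a * X) n =
      ∑ k ∈ Finset.range (n + 1),
        (n.choose k : Polynomial (AlgebraicClosure (ZMod p))) *
          C (a ^ (n - k)) * X ^ p ^ (k * m) :=
  iter_additive_binomial_general p m a hafix n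
end

section
/- Let p be an odd prime, m ≥ 1, a ∈ F_{p^m}^×, and f(x) = x^{p^m} + a·x as a self-map of the algebraic closure of F_p. If p^m - 1 divides n, then the number of fixed points of f^n (counted without multiplicity) equals p^{(n - p^{v_p(n)})·m}. -/
/-! The map `f = Φ + A` is the sum of the commuting additive maps `Φ y = y ^ p ^ m` and
`A y = a * y`, so `f^[n] x = ∑ k, C(n, k) a ^ (n - k) x ^ p ^ (m k)`. Put `s = p ^ v_p(n)`: in
characteristic `p` we have `(1 + X) ^ n = (1 + X ^ s) ^ (n / s)`, so `C(n, k)` vanishes for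
`0 < k < s` while `C(n, s) = n / s` does not, and `a ^ n = 1`. Hence `f^[n] x - x` is an additive
polynomial whose lowest term is a nonzero multiple of `x ^ p ^ (m s)`; it is the `p ^ (m s)`-th
power of an additive polynomial with nonzero linear term, which is separable of degree
`p ^ (m (n - s))`. -/

open Finset Polynomial

theorem Nat.cast_choose_eq_ite_of_pow_dvd {R : Type*} [CommSemiring R] {p : ℕ} [ExpChar R p]
    {e n : ℕ} (k : ℕ) (h : p ^ e ∣ n) :
    (n.choose k : R) = if p ^ e ∣ k then ((n / p ^ e).choose (k / p ^ e) : R) else 0 := by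
  obtain ⟨n', rfl⟩ := h
  have hpos : 0 < p ^ e := pow_pos (expChar_pos R p) e
  have hexpand : ((X + 1 : R[X]) ^ p ^ e) ^ n' = expand R (p ^ e) ((X + 1) ^ n') := by
    rw [add_pow_expChar_pow, one_pow, map_pow, map_add, expand_X, map_one]
  rw [← coeff_X_add_one_pow, pow_mul, hexpand, coeff_expand hpos, coeff_X_add_one_pow,
    Nat.mul_div_cancel_left _ hpos]

theorem Nat.cast_choose_eq_zero_of_lt_pow_padicValNat {R : Type*} [CommSemiring R] {p : ℕ}
    [ExpChar R p] {n k : ℕ} (hk₀ : 0 < k) (hk : k < p ^ padicValNat p n) :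
    (n.choose k : R) = 0 := by
  rw [Nat.cast_choose_eq_ite_of_pow_dvd (p := p) k pow_padicValNat_dvd,
    if_neg (Nat.not_dvd_of_pos_of_lt hk₀ hk)]

theorem Nat.cast_choose_pow_padicValNat_ne_zero {R : Type*} [CommRing R] {p : ℕ}
    [Fact p.Prime] [CharP R p] {n : ℕ} (hn : n ≠ 0) :
    (n.choose (p ^ padicValNat p n) : R) ≠ 0 := by
  have hp := Fact.out (p := p.Prime)
  rw [Nat.cast_choose_eq_ite_of_pow_dvd (p := p) _ pow_padicValNat_dvd, if_pos dvd_rfl,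
    Nat.div_self (pow_pos hp.pos _), Nat.choose_one_right, Ne, CharP.cast_eq_zero_iff R p,
    ← Nat.factorization_def n hp]
  exact Nat.not_dvd_ordCompl hp hn

theorem iterate_pow_pow_add_mul_apply {K : Type*} [CommSemiring K] {p : ℕ} [ExpChar K p]
    {m : ℕ} {a : K} (ha : a ^ p ^ m = a) (n : ℕ) (x : K) :
    (fun y => y ^ p ^ m + a * y)^[n] x =
      ∑ k ∈ range (n + 1), (n.choose k : K) * a ^ (n - k) * x ^ p ^ (m * k) := by
  let Φ : AddMonoid.End K := (iterateFrobenius K p m).toAddMonoidHom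
  let A : AddMonoid.End K := AddMonoidHom.mulLeft a
  have hΦA : Commute Φ A := AddMonoidHom.ext fun y => by
    change iterateFrobenius K p m (a * y) = a * iterateFrobenius K p m y
    rw [map_mul, iterateFrobenius_def, ha]
  have hΦ : ∀ k y, (Φ ^ k) y = iterateFrobenius K p (m * k) y := fun k y => by
    rw [AddMonoid.End.coe_pow, iterateFrobenius_mul_apply]; rfl
  have hA : ∀ j y, (A ^ j) y = a ^ j * y := fun j y => by
    rw [AddMonoid.End.coe_pow]; exact congrFun (mul_left_iterate a j) y
  have ha' : ∀ k, iterateFrobenius K p (m * k) a = a := fun k => by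
    rw [iterateFrobenius_mul_apply]; exact Function.iterate_fixed ha k
  change (⇑(Φ + A))^[n] x = _
  rw [← AddMonoid.End.coe_pow, hΦA.add_pow]
  refine (AddMonoidHom.finsetSum_apply _ _ _).trans (sum_congr rfl fun k _ => ?_)
  change (Φ ^ k) ((A ^ (n - k)) (n.choose k • x)) = _
  rw [hΦ, hA, nsmul_eq_mul, map_mul, map_mul, map_pow, map_natCast, ha', iterateFrobenius_def]
  ring

theorem iterate_pow_pow_add_mul_eq_self_iff {K : Type*} [CommRing K] {p : ℕ} [ExpChar K p]
    {m n : ℕ} {a : K} (ha : a ^ p ^ m = a) (hn : n ≠ 0) (han : a ^ n = 1) (x : K) :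
    (fun y => y ^ p ^ m + a * y)^[n] x = x ↔
      ∑ j ∈ range (n + 1 - p ^ padicValNat p n), (n.choose (p ^ padicValNat p n + j) : K) *
        a ^ (n - (p ^ padicValNat p n + j)) * x ^ p ^ (m * (p ^ padicValNat p n + j)) = 0 := by
  set s := p ^ padicValNat p n
  have hs : 0 < s := pow_pos (expChar_pos K p) _
  have hsn : s ≤ n + 1 :=
    (Nat.le_of_dvd (Nat.pos_of_ne_zero hn) pow_padicValNat_dvd).trans n.le_succ
  have hlow : ∑ k ∈ range s, (n.choose k : K) * a ^ (n - k) * x ^ p ^ (m * k) = x := by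
    obtain ⟨t, ht⟩ := Nat.exists_eq_add_of_lt hs
    rw [ht, sum_range_succ', sum_eq_zero fun k hk => ?_]
    · simp [han]
    · rw [Nat.cast_choose_eq_zero_of_lt_pow_padicValNat (p := p) k.succ_pos
        (by rw [mem_range] at hk; omega)]
      ring
  rw [iterate_pow_pow_add_mul_apply ha]
  conv_lhs => rw [← Nat.add_sub_cancel' hsn, sum_range_add, hlow]
  exact add_eq_left

theorem sum_mul_pow_pow_add_eq_zero_iff {K ι : Type*} [CommSemiring K] {p : ℕ} [ExpChar K p]
    [PerfectRing K p] (e : ℕ) (s : Finset ι) (c : ι → K) (g : ι → ℕ) (x : K) :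
    ∑ i ∈ s, c i * x ^ p ^ (e + g i) = 0 ↔
      ∑ i ∈ s, (iterateFrobeniusEquiv K p e).symm (c i) * x ^ p ^ g i = 0 := by
  set ψ := iterateFrobeniusEquiv K p e
  have hψ :
      ∑ i ∈ s, c i * x ^ p ^ (e + g i) = ψ (∑ i ∈ s, ψ.symm (c i) * x ^ p ^ g i) := by
    rw [map_sum]
    refine sum_congr rfl fun i _ => ?_
    rw [map_mul, ψ.apply_symm_apply, iterateFrobeniusEquiv_def, ← pow_mul, ← pow_add,
      add_comm]
  rw [hψ, ψ.map_eq_zero_iff]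

theorem Polynomial.separable_of_derivative_eq_C {R : Type*} [CommRing R] {f : R[X]} {u : R}
    (hu : IsUnit u) (h : derivative f = C u) : f.Separable := by
  rw [Separable, h]
  exact isCoprime_one_right.of_isCoprime_of_dvd_right (isUnit_C.mpr hu).dvd

theorem ncard_setOf_sum_mul_pow_pow_eq_zero {K : Type*} [Field K] [IsAlgClosed K] {p : ℕ}
    [hp : Fact p.Prime] [CharP K p] {m N : ℕ} (hm : 0 < m) {c : ℕ → K} (h₀ : c 0 ≠ 0)
    (hN : c N ≠ 0) :
    {x : K | ∑ j ∈ range (N + 1), c j * x ^ p ^ (m * j) = 0}.ncard = p ^ (m * N) := by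
  classical
  set f : K[X] := ∑ j ∈ range (N + 1), C (c j) * X ^ p ^ (m * j)
  have hexp : StrictMono fun j => p ^ (m * j) := fun i j hij =>
    Nat.pow_lt_pow_right hp.out.one_lt (Nat.mul_lt_mul_of_pos_left hij hm)
  have hcoeff : f.coeff (p ^ (m * N)) = c N := by
    rw [finsetSum_coeff, sum_eq_single_of_mem N (self_mem_range_succ N)]
    · simp
    · intro j _ hj
      simp [coeff_X_pow, (hexp.injective.ne hj).symm]
  have hdeg : f.natDegree = p ^ (m * N) := by
    refine le_antisymm (natDegree_sum_le_of_forall_le _ _ fun j hj => ?_)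
      (le_natDegree_of_ne_zero (hcoeff ▸ hN))
    exact (natDegree_C_mul_X_pow_le _ _).trans
      (hexp.monotone (Nat.lt_succ_iff.mp (mem_range.mp hj)))
  have hf : f ≠ 0 := fun hf => hN (by rw [← hcoeff, hf, coeff_zero])
  have hderiv : derivative f = C (c 0) := by
    rw [derivative_sum, sum_eq_single_of_mem 0 (mem_range.mpr N.succ_pos)]
    · simp
    · intro j _ hj
      rw [derivative_C_mul_X_pow, (CharP.cast_eq_zero_iff K p _).mpr
        (dvd_pow_self p (Nat.mul_ne_zero hm.ne' hj)), mul_zero, map_zero, zero_mul]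
  have hsep : f.Separable := separable_of_derivative_eq_C (Ne.isUnit h₀) hderiv
  have hzeros :
      {x : K | ∑ j ∈ range (N + 1), c j * x ^ p ^ (m * j) = 0} = f.roots.toFinset := by
    ext x
    simp [mem_roots hf, f, eval_finsetSum]
  rw [hzeros, Set.ncard_coe_finset, Multiset.toFinset_card_of_nodup (nodup_roots hsep),
    IsAlgClosed.card_roots_eq_natDegree, hdeg]

theorem card_fixedPoints_additive_map_general (p m n : ℕ) [Fact p.Prime]
    (hm : 0 < m) (a : AlgebraicClosure (ZMod p)) (ha : a ≠ 0) (hafix : a ^ p ^ m = a)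
    (hn : 0 < n) (hdvd : p ^ m - 1 ∣ n) :
    Set.ncard {x : AlgebraicClosure (ZMod p) | (fun y => y ^ p ^ m + a * y)^[n] x = x} =
      p ^ ((n - p ^ padicValNat p n) * m) := by
  set s := p ^ padicValNat p n
  have hsn : s ≤ n := Nat.le_of_dvd hn pow_padicValNat_dvd
  have han : a ^ n = 1 := by
    have hq : a ^ (p ^ m - 1) = 1 := by
      refine mul_left_cancel₀ ha ?_
      rw [← pow_succ', Nat.sub_add_cancel (Nat.one_le_pow _ _ (Fact.out : p.Prime).pos), hafix,
        mul_one]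
    obtain ⟨t, rfl⟩ := hdvd
    rw [pow_mul, hq, one_pow]
  let ψ := iterateFrobeniusEquiv (AlgebraicClosure (ZMod p)) p (m * s)
  have hfix : ∀ x, (fun y => y ^ p ^ m + a * y)^[n] x = x ↔
      ∑ j ∈ range (n - s + 1), ψ.symm (n.choose (s + j) * a ^ (n - (s + j))) *
        x ^ p ^ (m * j) = 0 := fun x => by
    rw [iterate_pow_pow_add_mul_eq_self_iff hafix hn.ne' han, Nat.sub_add_comm hsn]
    simp_rw [mul_add]
    exact sum_mul_pow_pow_add_eq_zero_iff (m * s) _ _ _ x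
  simp_rw [hfix]
  rw [ncard_setOf_sum_mul_pow_pow_eq_zero hm, mul_comm]
  · exact ψ.symm.map_ne_zero_iff.mpr
      (mul_ne_zero (Nat.cast_choose_pow_padicValNat_ne_zero hn.ne') (pow_ne_zero _ ha))
  · simp [Nat.add_sub_cancel' hsn]

theorem card_fixedPoints_additive_map (p m n : ℕ) [Fact p.Prime] (hp : Odd p)
    (hm : 0 < m) (a : AlgebraicClosure (ZMod p)) (ha : a ≠ 0) (hafix : a ^ p ^ m = a)
    (hn : 0 < n) (hdvd : p ^ m - 1 ∣ n) :
    Set.ncard {x : AlgebraicClosure (ZMod p) | (fun y => y ^ p ^ m + a * y)^[n] x = x} =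
      p ^ ((n - p ^ padicValNat p n) * m) :=
  card_fixedPoints_additive_map_general p m n hm a ha hafix hn hdvd
end

section
/- Let p be a prime and f ∈ F_p-bar[x^p] with deg f = d ≥ 2. The Artin–Mazur zeta function of f on the algebraic closure of F_p equals 1/(1 - d·t); in particular it is a rational function over Q. -/
/-!
Only monomials `x ^ (p * k)` occur in `f`, so `f' = 0` in characteristic `p`, and the same holds for
every iterate `f^[n]`. Hence `f^[n] - X` has derivative `-1`: it is separable of degree `d ^ n`, and
`f^[n]` has exactly `d ^ n` fixed points in the algebraic closure. With `a n = d ^ n`, the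
logarithmic derivative of `F` is `d / (1 - d t)`, which together with `F(0) = 1` pins down
`F = 1 / (1 - d t)`.
-/

open Polynomial PowerSeries

namespace Polynomial

theorem derivative_eq_zero_of_coeff_eq_zero_of_not_dvd {R : Type*} [Semiring R] (p : ℕ) [CharP R p]
    {f : R[X]} (hf : ∀ i, ¬ p ∣ i → f.coeff i = 0) : derivative f = 0 := by
  ext n
  rw [coeff_derivative, coeff_zero]
  by_cases h : p ∣ n + 1
  · rw [← Nat.cast_succ, (CharP.cast_eq_zero_iff R p _).mpr h, mul_zero]
  · rw [hf _ h, zero_mul]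

theorem derivative_iterate_comp_eq_zero {R : Type*} [CommSemiring R] {f : R[X]}
    (hf : derivative f = 0) (g : R[X]) (n : ℕ) : derivative (f.comp^[n + 1] g) = 0 := by
  rw [Function.iterate_succ_apply', derivative_comp, hf, zero_comp, mul_zero]

theorem ncard_setOf_eval_eq_self {K : Type*} [Field K] [IsAlgClosed K] {g : K[X]}
    (hg : derivative g = 0) (hdeg : 1 < g.natDegree) :
    {x | g.eval x = x}.ncard = g.natDegree := by
  set q := g - X
  have hq : q.natDegree = g.natDegree :=
    natDegree_sub_eq_left_of_natDegree_lt (by rwa [natDegree_X])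
  have hq0 : q ≠ 0 := ne_zero_of_natDegree_gt (hq ▸ hdeg)
  have hsep : q.Separable := by
    rw [Separable, derivative_sub, hg, derivative_X, zero_sub]
    exact isCoprime_one_right.neg_right
  have hset : {x | g.eval x = x} = q.rootSet K := by
    ext x
    simp [mem_rootSet, hq0, q, sub_eq_zero]
  rw [hset, Set.ncard_eq_toFinset_card', Set.toFinset_card,
    card_rootSet_eq_natDegree hsep (IsAlgClosed.splits _), hq]

end Polynomial

namespace PowerSeries

variable {R : Type*} [CommRing R]

theorem mk_pow_mul_one_sub_C_mul_X (c : R) : mk (fun n => c ^ n) * (1 - C c * X) = 1 := by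
  have := congrArg (rescale c) (mk_one_mul_one_sub_eq_one (S := R))
  simpa [rescale_mk] using this

theorem mul_one_sub_C_mul_X_eq_one_of_derivative_eq [IsAddTorsionFree R] {F : R⟦X⟧} (c : R)
    (hF0 : constantCoeff F = 1) (hF : d⁄dX R F = F * mk (fun n => c ^ (n + 1))) :
    F * (1 - C c * X) = 1 := by
  have hmk : mk (fun n => c ^ (n + 1)) = C c * mk (fun n => c ^ n) := by
    ext n; simp [pow_succ']
  refine derivative.ext ?_ (by simp [hF0])
  have hG : d⁄dX R (1 - C c * X) = -C c := by simp
  rw [Derivation.leibniz, hF, hmk, hG, Derivation.map_one_eq_zero, smul_eq_mul, smul_eq_mul]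
  linear_combination (F * C c) * mk_pow_mul_one_sub_C_mul_X c

end PowerSeries

theorem zeta_rational_of_mem_xp (p : ℕ) [Fact p.Prime]
    (f : Polynomial (AlgebraicClosure (ZMod p)))
    (hf : ∀ i, ¬ p ∣ i → f.coeff i = 0) (hd : 2 ≤ f.natDegree)
    (a : ℕ → ℕ)
    (ha : ∀ n, a n = Set.ncard {x : AlgebraicClosure (ZMod p) | (fun y => f.eval y)^[n] x = x})
    (F : PowerSeries ℚ) (hF0 : PowerSeries.constantCoeff F = 1)
    (hF : d⁄dX ℚ F = F * PowerSeries.mk (fun n => (a (n + 1) : ℚ))) :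
    F * (1 - PowerSeries.C (f.natDegree : ℚ) * PowerSeries.X) = 1 ∧
      ∃ P Q : Polynomial ℚ, Q ≠ 0 ∧ (Q : PowerSeries ℚ) * F = (P : PowerSeries ℚ) := by
  set d := f.natDegree
  have hf' : derivative f = 0 := derivative_eq_zero_of_coeff_eq_zero_of_not_dvd p hf
  have ha' : ∀ n, a (n + 1) = d ^ (n + 1) := fun n => by
    have hdeg : (f.comp^[n + 1] X).natDegree = d ^ (n + 1) := by simp [d, pow_succ]
    rw [ha, ← hdeg, ← ncard_setOf_eval_eq_self (derivative_iterate_comp_eq_zero hf' X n)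
      (hdeg ▸ Nat.one_lt_pow n.succ_ne_zero hd)]
    simp only [iterate_comp_eval, eval_X]
  have hmain : F * (1 - PowerSeries.C (d : ℚ) * PowerSeries.X) = 1 :=
    mul_one_sub_C_mul_X_eq_one_of_derivative_eq _ hF0 (by simpa [ha'] using hF)
  refine ⟨hmain, 1, 1 - Polynomial.C (d : ℚ) * Polynomial.X, fun h => ?_, ?_⟩
  · simpa using congrArg (Polynomial.coeff · 0) h
  · rw [Polynomial.coe_sub, Polynomial.coe_one, Polynomial.coe_mul, Polynomial.coe_C,
      Polynomial.coe_X, mul_comm, hmain]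
end

section
/- Let p be a prime, q a prime with q not congruent to 1 mod p, and d > 1 an integer. The set Y = {n ∈ N : v_p((q-1)n + 1) ≡ 0 (mod d)} does not have an eventually periodic characteristic sequence. -/
/-!
Put `a = q - 1`; then `p ∤ a`. Suppose the condition `d ∣ v_p(a n + 1)` had period `k` from `N`
on, and let `s = v_p(a k)`. As `a` is invertible modulo every power of `p`, the values
`v_p(a n + 1)` with `n ≥ N` run through all natural numbers, and whenever `v_p(a n + 1) > s`
the ultrametric inequality gives `v_p(a (n + k) + 1) = s`. Periodicity then forces
`d ∣ m ↔ d ∣ s` for all `m > s`, which fails at one of two consecutive values of `m`.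
-/

namespace Nat

theorem not_dvd_sub_one_of_mod_ne_one {p q : ℕ} (hp : p ≠ 1) (hq : q ≠ 0) (h : q % p ≠ 1) :
    ¬ p ∣ q - 1 := fun hdvd =>
  h <| Eq.trans ((modEq_iff_dvd' (one_le_iff_ne_zero.2 hq)).2 hdvd).symm (one_mod_eq_one.2 hp)

theorem exists_lt_dvd_and_not_dvd_succ {d : ℕ} (hd : 1 < d) (s : ℕ) :
    ∃ m, s < m ∧ d ∣ m ∧ ¬ d ∣ m + 1 := by
  refine ⟨d * (s + 1), by nlinarith, dvd_mul_right _ _, fun h => ?_⟩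
  exact hd.ne' (Nat.dvd_one.1 ((Nat.dvd_add_right (dvd_mul_right d (s + 1))).1 h))

theorem exists_ge_mul_modEq {a M : ℕ} (hM : M ≠ 0) (ha : a.Coprime M) (r N : ℕ) :
    ∃ n ≥ N, a * n ≡ r [MOD M] := by
  obtain ⟨m, -, hm⟩ := exists_mul_mod_eq_of_coprime r ha hM
  refine ⟨m + M * N, (Nat.le_mul_of_pos_left N (pos_of_ne_zero hM)).trans (le_add_left _ _), ?_⟩
  rw [ModEq, mul_add, mul_left_comm, add_mul_mod_self_left, hm]

end Nat

section padicValNat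

variable {p : ℕ} [Fact p.Prime]

theorem padicValNat_add_eq_of_lt {x y : ℕ} (hx : x ≠ 0) (hy : y ≠ 0)
    (h : padicValNat p x < padicValNat p y) : padicValNat p (x + y) = padicValNat p x := by
  have := padicValRat.add_eq_of_lt (p := p) (q := x) (r := y) (by positivity)
    (by exact_mod_cast hx) (by exact_mod_cast hy) (by simpa [padicValRat.of_nat])
  rw [← Nat.cast_add, padicValRat.of_nat, padicValRat.of_nat] at this
  exact_mod_cast this

theorem padicValNat_eq_of_modEq_pow_succ {x m : ℕ} (h : x ≡ p ^ m [MOD p ^ (m + 1)]) :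
    padicValNat p x = m := by
  have hp := (Fact.out : p.Prime)
  have h_pow_dvd : p ^ m ∣ x := (h.dvd_iff (pow_dvd_pow p m.le_succ)).2 dvd_rfl
  have h_not_dvd : ¬ p ^ (m + 1) ∣ x := fun hdvd =>
    absurd ((h.dvd_iff dvd_rfl).1 hdvd) ((Nat.pow_dvd_pow_iff_le_right hp.one_lt).not.2 (by omega))
  have hx : x ≠ 0 := by rintro rfl; exact h_not_dvd (dvd_zero _)
  rw [padicValNat_def hx]
  exact multiplicity_eq_of_dvd_of_not_dvd h_pow_dvd h_not_dvd

theorem exists_ge_padicValNat_mul_add_one_eq {a : ℕ} (hpa : ¬ p ∣ a) (m N : ℕ) :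
    ∃ n ≥ N, padicValNat p (a * n + 1) = m := by
  have hp := (Fact.out : p.Prime)
  have ha : a.Coprime (p ^ (m + 1)) := ((hp.coprime_iff_not_dvd.2 hpa).pow_left _).symm
  obtain ⟨n, hnN, hn⟩ := Nat.exists_ge_mul_modEq (pow_ne_zero _ hp.ne_zero) ha (p ^ m - 1) N
  refine ⟨n, hnN, padicValNat_eq_of_modEq_pow_succ ?_⟩
  simpa [Nat.sub_add_cancel (Nat.one_le_pow _ _ hp.pos)] using hn.add_right 1

end padicValNat

theorem valuation_affine_set_not_eventually_periodic (p q d : ℕ) [Fact p.Prime]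
    (hq : q.Prime) (hq1 : q % p ≠ 1) (hd : 1 < d) :
    ¬ ∃ k N : ℕ, 0 < k ∧ ∀ n ≥ N,
      (d ∣ padicValNat p ((q - 1) * (n + k) + 1) ↔ d ∣ padicValNat p ((q - 1) * n + 1)) := by
  rintro ⟨k, N, hk, hper⟩
  have hpa : ¬ p ∣ q - 1 :=
    Nat.not_dvd_sub_one_of_mod_ne_one (Fact.out : p.Prime).ne_one hq.ne_zero hq1
  have hak : (q - 1) * k ≠ 0 := mul_ne_zero (fun h => hpa (h ▸ dvd_zero p)) hk.ne'
  set s := padicValNat p ((q - 1) * k)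
  have hconst : ∀ m, s < m → (d ∣ m ↔ d ∣ s) := by
    intro m hm
    obtain ⟨n, hnN, hn⟩ := exists_ge_padicValNat_mul_add_one_eq hpa m N
    have hshift : padicValNat p ((q - 1) * (n + k) + 1) = s := by
      rw [show (q - 1) * (n + k) + 1 = (q - 1) * k + ((q - 1) * n + 1) by ring]
      exact padicValNat_add_eq_of_lt hak (by omega) (hn ▸ hm)
    rw [← hshift, ← hn]
    exact (hper n hnN).symm
  obtain ⟨m, hsm, hdm, hdm1⟩ := Nat.exists_lt_dvd_and_not_dvd_succ hd s
  exact hdm1 ((hconst (m + 1) (by omega)).2 ((hconst m hsm).1 hdm))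
end

section
/- Let p be an odd prime and d > 1. Suppose the sequence y over {0,1} defined by y_n = 1 iff v_p((q-1)n+1) ≡ 0 mod d is eventually periodic with period k = M·p^N where p ∤ M, and q ≢ 1 mod p is prime. Then there exist arbitrarily large n and a positive integer a with v_p((q-1)n+1) = dN and v_p((q-1)(n+ak)+1) = dN+1, contradicting periodicity. -/
/-!
Put `e = q - 1`, a unit modulo every power of `p`. Choose `n` with
`e * n + 1 ≡ p ^ (d * N) [MOD p ^ (d * N + 2)]`, and a multiple `a * k = b * M * p ^ (d * N)` of the
period with `e * b * M ≡ p - 1 [MOD p ^ 2]`. Adding, `e * (n + a * k) + 1` is congruent to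
`p ^ (d * N) + (p - 1) * p ^ (d * N) = p ^ (d * N + 1)`, so the valuation rises from `d * N` to
`d * N + 1`. Since `d > 1`, the exponent `d * N - N` used to build `a` from `k` is not truncated.
-/

theorem padicValNat_eq_of_modEq_pow {p m v : ℕ} [Fact p.Prime] (h : m ≡ p ^ v [MOD p ^ (v + 1)]) :
    padicValNat p m = v := by
  have hp : 1 < p := (Fact.out : p.Prime).one_lt
  have hdvd : p ^ v ∣ m := (h.dvd_iff (pow_dvd_pow p v.le_succ)).mpr dvd_rfl
  have hndvd : ¬ p ^ (v + 1) ∣ m := fun hd =>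
    absurd ((Nat.pow_dvd_pow_iff_le_right hp).mp ((h.dvd_iff dvd_rfl).mp hd)) (by omega)
  have hm : m ≠ 0 := by rintro rfl; exact hndvd (dvd_zero _)
  refine le_antisymm ?_ ((padicValNat_dvd_iff_le hm).mp hdvd)
  by_contra! hlt
  exact hndvd ((padicValNat_dvd_iff_le hm).mpr hlt)

theorem Nat.exists_ge_mul_modEq_of_coprime {e P : ℕ} (h : e.Coprime P) (hP : P ≠ 0) (c B : ℕ) :
    ∃ n ≥ B, e * n ≡ c [MOD P] := by
  obtain ⟨x, -, hx⟩ := Nat.exists_mul_mod_eq_of_coprime c h hP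
  refine ⟨x + B * P, Nat.le_add_left_of_le (Nat.le_mul_of_pos_right B (Nat.pos_of_ne_zero hP)), ?_⟩
  calc e * (x + B * P) = e * x + e * B * P := by ring
    _ ≡ e * x [MOD P] := Nat.add_mul_mod_self_right _ _ _
    _ ≡ c [MOD P] := hx

theorem coprime_sub_one_of_mod_ne_one {p q : ℕ} (hp : p.Prime) (hq : q ≠ 0) (hq1 : q % p ≠ 1) :
    (q - 1).Coprime p := by
  refine (hp.coprime_iff_not_dvd.mpr fun ⟨c, hc⟩ => hq1 ?_).symm
  rw [show q = p * c + 1 by omega, Nat.mul_add_mod, Nat.mod_eq_of_lt hp.one_lt]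

theorem exists_valuation_jump_general (p q d M N : ℕ) [Fact p.Prime]
    (hq : q.Prime) (hq1 : q % p ≠ 1) (hd : 1 < d) (hpM : ¬ p ∣ M)
    (k : ℕ) (hk : k = M * p ^ N) :
    ∀ B : ℕ, ∃ n ≥ B, ∃ a : ℕ, 0 < a ∧
      padicValNat p ((q - 1) * n + 1) = d * N ∧
      padicValNat p ((q - 1) * (n + a * k) + 1) = d * N + 1 := by
  intro B
  have hp : p.Prime := Fact.out
  have he := coprime_sub_one_of_mod_ne_one hp hq.ne_zero hq1
  have hpow : 1 ≤ p ^ (d * N) := Nat.one_le_pow _ _ hp.pos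
  obtain ⟨n, hnB, hn⟩ := Nat.exists_ge_mul_modEq_of_coprime (he.pow_right (d * N + 2))
    (pow_ne_zero _ hp.ne_zero) (p ^ (d * N) - 1) B
  obtain ⟨b, hb0, hb⟩ := Nat.exists_ge_mul_modEq_of_coprime
    ((he.mul_left (Nat.Coprime.symm (hp.coprime_iff_not_dvd.mpr hpM))).pow_right 2)
    (pow_ne_zero _ hp.ne_zero) (p - 1) 1
  have hn' : (q - 1) * n + 1 ≡ p ^ (d * N) [MOD p ^ (d * N + 2)] := by
    simpa only [Nat.sub_add_cancel hpow] using hn.add_right 1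
  have hak : (q - 1) * (p ^ (d * N - N) * b * k) ≡ (p - 1) * p ^ (d * N) [MOD p ^ (d * N + 2)] := by
    have hpow_eq : p ^ (d * N - N) * p ^ N = p ^ (d * N) := by
      rw [← pow_add, Nat.sub_add_cancel (Nat.le_mul_of_pos_left N (by omega))]
    rw [hk, show (q - 1) * (p ^ (d * N - N) * b * (M * p ^ N)) = (q - 1) * M * b * p ^ (d * N) by
      rw [← hpow_eq]; ring, show d * N + 2 = 2 + d * N by ring, pow_add]
    exact hb.mul_right' _
  refine ⟨n, hnB, p ^ (d * N - N) * b, Nat.mul_pos (pow_pos hp.pos _) hb0,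
    padicValNat_eq_of_modEq_pow (hn'.of_dvd (pow_dvd_pow p (by omega))),
    padicValNat_eq_of_modEq_pow ?_⟩
  calc (q - 1) * (n + p ^ (d * N - N) * b * k) + 1
      = ((q - 1) * n + 1) + (q - 1) * (p ^ (d * N - N) * b * k) := by ring
    _ ≡ p ^ (d * N) + (p - 1) * p ^ (d * N) [MOD p ^ (d * N + 2)] := hn'.add hak
    _ = p ^ (d * N + 1) := by rw [pow_succ, ← one_add_mul, Nat.add_sub_cancel' hp.one_le, mul_comm]

theorem exists_valuation_jump (p q d M N : ℕ) [Fact p.Prime] (hp : Odd p)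
    (hq : q.Prime) (hq1 : q % p ≠ 1) (hd : 1 < d) (hM : 0 < M) (hpM : ¬ p ∣ M)
    (k : ℕ) (hk : k = M * p ^ N)
    (hper : ∃ N₀ : ℕ, ∀ n ≥ N₀,
      (d ∣ padicValNat p ((q - 1) * (n + k) + 1) ↔ d ∣ padicValNat p ((q - 1) * n + 1))) :
    ∀ B : ℕ, ∃ n ≥ B, ∃ a : ℕ, 0 < a ∧
      padicValNat p ((q - 1) * n + 1) = d * N ∧
      padicValNat p ((q - 1) * (n + a * k) + 1) = d * N + 1 :=
  exists_valuation_jump_general p q d M N hq hq1 hd hpM k hk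
end

section
/- Let m ≥ 2 with p ∤ m for an odd prime p, and let q > m^{p-1} be a prime with q ≢ 1 (mod p). Setting a_n = 1 + (m^n-1)/p^{v_p(m^n-1)}, the subsequence a_{(p-1)((q-1)n+1)} is congruent mod q to 1 + (m^{p-1} - 1)·r^{v_p((q-1)n+1) + v_p(m^{p-1}-1)}, where r = p^{-1} in F_q. -/
lemma aux_succ_le_two_pow : ∀ n, 2 ≤ n → n + 1 ≤ 2 ^ n := by
  intro n hn
  induction n with
  | zero => omega
  | succ k ih =>
    rcases Nat.lt_or_ge k 2 with h | h
    · interval_cases k <;> simp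
    · have := ih h
      have : 2 ^ (k + 1) = 2 * 2 ^ k := by ring
      omega

theorem subsequence_congruence (p q m : ℕ) [Fact p.Prime] (hp : Odd p)
    (hm : 2 ≤ m) (hpm : ¬ p ∣ m) (hq : q.Prime) (hqm : m ^ (p - 1) < q)
    (hq1 : q % p ≠ 1)
    (a : ℕ → ℕ) (ha : ∀ j, a j = 1 + (m ^ j - 1) / p ^ padicValNat p (m ^ j - 1))
    (r : ZMod q) (hr : r = (p : ZMod q)⁻¹) (n : ℕ) :
    (a ((p - 1) * ((q - 1) * n + 1)) : ZMod q) =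
      1 + ((m : ZMod q) ^ (p - 1) - 1) *
        r ^ (padicValNat p ((q - 1) * n + 1) + padicValNat p (m ^ (p - 1) - 1)) := by
  haveI : Fact q.Prime := ⟨hq⟩
  have hpp := (Fact.out : p.Prime)
  have hp3 : 3 ≤ p := by
    rcases hp with ⟨t, ht⟩
    have := hpp.two_le
    omega
  set k := (q - 1) * n + 1 with hk
  have hk0 : k ≠ 0 := by omega
  have hm1 : 2 ≤ m ^ (p - 1) := le_trans hm (Nat.le_self_pow (by omega) m)
  -- Fermat: p ∣ m^(p-1) - 1
  have hmz : (m : ZMod p) ≠ 0 := by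
    simpa [ZMod.natCast_eq_zero_iff] using hpm
  have hfermat : p ∣ m ^ (p - 1) - 1 := by
    have h1 : (m : ZMod p) ^ (p - 1) = 1 := ZMod.pow_card_sub_one_eq_one hmz
    have : ((m ^ (p - 1) - 1 : ℕ) : ZMod p) = 0 := by
      push_cast [Nat.cast_sub (by omega : 1 ≤ m ^ (p - 1))]
      rw [h1]; ring
    exact (ZMod.natCast_eq_zero_iff _ _).mp this
  have hpmp : ¬ p ∣ m ^ (p - 1) := fun h => hpm (hpp.dvd_of_dvd_pow h)
  -- LTE
  have hlte : padicValNat p (m ^ ((p - 1) * k) - 1) =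
      padicValNat p (m ^ (p - 1) - 1) + padicValNat p k := by
    have := padicValNat.pow_sub_pow (p := p) hp (x := m ^ (p - 1)) (y := 1)
      (by omega) (by simpa using hfermat) hpmp hk0
    simpa [pow_mul, one_pow] using this
  have hj1 : 1 ≤ m ^ ((p - 1) * k) := Nat.one_le_pow _ _ (by omega)
  set v := padicValNat p (m ^ ((p - 1) * k) - 1) with hv
  set x := (m ^ ((p - 1) * k) - 1) / p ^ v with hx
  have hdvd : p ^ v ∣ m ^ ((p - 1) * k) - 1 := pow_padicValNat_dvd
  have hxe : x * p ^ v = m ^ ((p - 1) * k) - 1 := Nat.div_mul_cancel hdvd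
  -- p < q, so p is a unit mod q
  have hpq : p < q := by
    have h1 : (p - 1) + 1 ≤ 2 ^ (p - 1) := aux_succ_le_two_pow (p - 1) (by omega)
    have h3 : 2 ^ (p - 1) ≤ m ^ (p - 1) := Nat.pow_le_pow_left hm _
    omega
  have hpz : (p : ZMod q) ≠ 0 := by
    rw [Ne, ZMod.natCast_eq_zero_iff]
    intro h
    have := Nat.le_of_dvd (by omega) h
    omega
  have hrp : r * (p : ZMod q) = 1 := by
    rw [hr]
    field_simp
  -- q ∤ m, so m^(q-1) = 1 mod q
  have hmq : (m : ZMod q) ≠ 0 := by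
    rw [Ne, ZMod.natCast_eq_zero_iff]
    intro h
    have hmle : m ≤ m ^ (p - 1) := Nat.le_self_pow (by omega) m
    have := Nat.le_of_dvd (by omega) h
    omega
  have hmq1 : (m : ZMod q) ^ (q - 1) = 1 := ZMod.pow_card_sub_one_eq_one hmq
  -- m^((p-1)*k) ≡ m^(p-1) mod q
  have hmjq : ((m : ZMod q)) ^ ((p - 1) * k) = (m : ZMod q) ^ (p - 1) := by
    have hje : (p - 1) * k = (q - 1) * ((p - 1) * n) + (p - 1) := by
      rw [hk]; ring
    rw [hje, pow_add, pow_mul, hmq1, one_pow, one_mul]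
  -- cast key equation
  have hcast : (x : ZMod q) * (p : ZMod q) ^ v = (m : ZMod q) ^ (p - 1) - 1 := by
    have := congrArg (fun t : ℕ => (t : ZMod q)) hxe
    simp only [Nat.cast_mul, Nat.cast_pow] at this
    rw [this, Nat.cast_sub hj1]
    push_cast
    rw [hmjq]
  have hxval : (x : ZMod q) = ((m : ZMod q) ^ (p - 1) - 1) * r ^ v := by
    have : (x : ZMod q) * (p : ZMod q) ^ v * r ^ v =
        ((m : ZMod q) ^ (p - 1) - 1) * r ^ v := by rw [hcast]
    rw [mul_assoc, ← mul_pow, mul_comm (p : ZMod q) r, hrp, one_pow, mul_one] at this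
    exact this
  rw [ha, Nat.cast_add, Nat.cast_one, ← hx, hxval, hlte, add_comm (padicValNat p (m ^ (p-1) - 1))]
end
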